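/- For ℓ ∈ ℕ and 0 ≤ m ≤ ℓ let P_ℓ^m(u) = (1 - u²)^{m/2} d^m/du^m P_ℓ(u), where P_ℓ(x) = (1/(2^ℓ ℓ!)) dℓ/dxℓ [ (x² - 1)^ℓ ]. Then for every fixed order m and all degrees ℓ ≠ ℓ' with m ≤ ℓ and m ≤ ℓ', the associated Legendre functions of the same order are orthogonal on [-1,1]: ∫_{-1}^{1} P_ℓ^m(x) P_{ℓ'}^m(x) dx = 0. -/

import Mathlib

open Real

/-- The Legendre polynomial of degree `ℓ`, given by Rodrigues' formula
`P_ℓ(x) = (1/(2^ℓ ℓ!)) dℓ/dxℓ [(x² - 1)^ℓ]`. -/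
noncomputable def legendreP (ℓ : ℕ) (x : ℝ) : ℝ :=
  (1 / (2 ^ ℓ * (Nat.factorial ℓ : ℝ))) *
    iteratedDeriv ℓ (fun t : ℝ => (t ^ 2 - 1) ^ ℓ) x

/-- The associated Legendre function `P_ℓ^m(u) = (1-u²)^{m/2} (d^m/du^m) P_ℓ(u)`
(without the Condon–Shortley sign). -/
noncomputable def assocLegendreP (ℓ m : ℕ) (u : ℝ) : ℝ :=
  (1 - u ^ 2) ^ ((m : ℝ) / 2) * iteratedDeriv m (legendreP ℓ) u

/-!
On `[-1, 1]` the product `P_ℓ^m P_{ℓ'}^m = (1 - x²)^m P_ℓ^{(m)} P_{ℓ'}^{(m)}` is a polynomial, and by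
Rodrigues' formula `P_ℓ^{(m)}` is a multiple of the `(ℓ + m)`-th derivative of `(x² - 1)^ℓ`.
Take `ℓ' < ℓ` and integrate by parts `ℓ + m` times: the boundary terms vanish at `±1` because
`(x² - 1)^ℓ` has a zero of order `ℓ` there and `(1 - x²)^m P_{ℓ'}^{(m)}` one of order `m`, and
all `ℓ + m` derivatives end up on `(1 - x²)^m P_{ℓ'}^{(m)}`, a polynomial of degree at most
`ℓ' + m < ℓ + m`.
-/

open Polynomial

namespace Polynomial

theorem iteratedDeriv_eval {𝕜 : Type*} [NontriviallyNormedField 𝕜] (p : 𝕜[X]) (n : ℕ) :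
    iteratedDeriv n (fun x => p.eval x) = fun x => (derivative^[n] p).eval x := by
  induction n with
  | zero => simp
  | succ n ih =>
    rw [iteratedDeriv_succ, ih, Function.iterate_succ_apply']
    ext x
    exact Polynomial.deriv _

theorem integral_eval_derivative_mul_eval {a b : ℝ} {p q : ℝ[X]}
    (ha : (p * q).eval a = 0) (hb : (p * q).eval b = 0) :
    ∫ x in a..b, (derivative p).eval x * q.eval x
      = -∫ x in a..b, p.eval x * (derivative q).eval x := by
  have hparts := intervalIntegral.integral_mul_deriv_eq_deriv_mul
    (fun x _ => p.hasDerivAt x) (fun x _ => q.hasDerivAt x)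
    ((derivative p).continuous.intervalIntegrable a b)
    ((derivative q).continuous.intervalIntegrable a b)
  rw [eval_mul] at ha hb
  linarith

theorem integral_eval_iterate_derivative_mul_eval_of_pow_dvd_left {a b : ℝ} {f : ℝ[X]}
    (ha : f.eval a = 0) (hb : f.eval b = 0) (n : ℕ) {p q : ℝ[X]} (hp : f ^ n ∣ p) :
    ∫ x in a..b, (derivative^[n] p).eval x * q.eval x
      = (-1) ^ n * ∫ x in a..b, p.eval x * (derivative^[n] q).eval x := by
  induction n generalizing p with
  | zero => simp
  | succ n ih =>
    have hfp : f ∣ p * derivative^[n] q := (dvd_pow_self f n.succ_ne_zero).trans (hp.mul_right _)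
    have hp' : f ^ n ∣ derivative p := by simpa using pow_sub_one_dvd_derivative_of_pow_dvd hp
    rw [Function.iterate_succ_apply, ih hp',
      integral_eval_derivative_mul_eval (eval_eq_zero_of_dvd_of_eval_eq_zero hfp ha)
        (eval_eq_zero_of_dvd_of_eval_eq_zero hfp hb), ← Function.iterate_succ_apply' derivative,
      pow_succ]
    ring

theorem integral_eval_iterate_derivative_mul_eval_of_pow_dvd {a b : ℝ} {f : ℝ[X]}
    (ha : f.eval a = 0) (hb : f.eval b = 0) {k : ℕ} (n : ℕ) {p q : ℝ[X]}
    (hp : f ^ k ∣ p) (hq : f ^ n ∣ q) :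
    ∫ x in a..b, (derivative^[k + n] p).eval x * q.eval x
      = (-1) ^ (k + n) * ∫ x in a..b, p.eval x * (derivative^[k + n] q).eval x := by
  induction n generalizing q with
  | zero => exact integral_eval_iterate_derivative_mul_eval_of_pow_dvd_left ha hb k hp
  | succ n ih =>
    have hfq : f ∣ derivative^[k + n] p * q :=
      (dvd_pow_self f n.succ_ne_zero).trans (hq.mul_left _)
    have hq' : f ^ n ∣ derivative q := by simpa using pow_sub_one_dvd_derivative_of_pow_dvd hq
    rw [← add_assoc, Function.iterate_succ_apply', integral_eval_derivative_mul_eval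
        (eval_eq_zero_of_dvd_of_eval_eq_zero hfq ha) (eval_eq_zero_of_dvd_of_eval_eq_zero hfq hb),
      ih hq', ← Function.iterate_succ_apply derivative, pow_succ]
    ring

theorem natDegree_one_sub_X_sq_pow_mul_iterate_derivative_le (m : ℕ) (p : ℝ[X]) :
    ((1 - X ^ 2) ^ m * derivative^[m] p).natDegree ≤ m + p.natDegree := by
  rcases le_or_gt m p.natDegree with hm | hm
  · calc ((1 - X ^ 2) ^ m * derivative^[m] p).natDegree
        ≤ ((1 - X ^ 2 : ℝ[X]) ^ m).natDegree + (derivative^[m] p).natDegree := natDegree_mul_le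
      _ ≤ m * 2 + (p.natDegree - m) :=
          add_le_add (natDegree_pow_le_of_le m (by compute_degree))
            (natDegree_iterate_derivative p m)
      _ = m + p.natDegree := by omega
  · simp [iterate_derivative_eq_zero hm]

end Polynomial

noncomputable def legendrePoly (ℓ : ℕ) : ℝ[X] :=
  C (1 / (2 ^ ℓ * (ℓ.factorial : ℝ))) * derivative^[ℓ] ((X ^ 2 - 1) ^ ℓ)

theorem legendreP_eq_eval (ℓ : ℕ) : legendreP ℓ = fun x => (legendrePoly ℓ).eval x := by
  have hrod : (fun t : ℝ => (t ^ 2 - 1) ^ ℓ) = fun t => ((X ^ 2 - 1) ^ ℓ : ℝ[X]).eval t := by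
    simp
  ext x
  simp [legendreP, legendrePoly, hrod, iteratedDeriv_eval]

theorem natDegree_legendrePoly_le (ℓ : ℕ) : (legendrePoly ℓ).natDegree ≤ ℓ := by
  have hrod : ((X ^ 2 - 1 : ℝ[X]) ^ ℓ).natDegree ≤ ℓ * 2 :=
    natDegree_pow_le_of_le ℓ (by compute_degree)
  have hder := natDegree_iterate_derivative ((X ^ 2 - 1 : ℝ[X]) ^ ℓ) ℓ
  have hconst := natDegree_C_mul_le (1 / (2 ^ ℓ * (ℓ.factorial : ℝ)))
    (derivative^[ℓ] ((X ^ 2 - 1 : ℝ[X]) ^ ℓ))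
  rw [legendrePoly]
  omega

theorem integral_eval_iterate_derivative_legendrePoly_mul_eq_zero (ℓ m : ℕ) {q : ℝ[X]}
    (hq : (X ^ 2 - 1) ^ m ∣ q) (hdeg : q.natDegree < ℓ + m) :
    ∫ x in (-1 : ℝ)..1, (derivative^[m] (legendrePoly ℓ)).eval x * q.eval x = 0 := by
  have hone : (X ^ 2 - 1 : ℝ[X]).eval 1 = 0 := by simp
  have hneg_one : (X ^ 2 - 1 : ℝ[X]).eval (-1) = 0 := by simp
  simp only [legendrePoly, iterate_derivative_C_mul, ← Function.iterate_add_apply, eval_mul,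
    eval_C, mul_assoc, intervalIntegral.integral_const_mul]
  rw [add_comm m, integral_eval_iterate_derivative_mul_eval_of_pow_dvd hneg_one hone m dvd_rfl hq,
    iterate_derivative_eq_zero hdeg]
  simp

theorem assocLegendreP_mul_assocLegendreP {x : ℝ} (hx : x ∈ Set.Icc (-1 : ℝ) 1) (ℓ ℓ' m : ℕ) :
    assocLegendreP ℓ m x * assocLegendreP ℓ' m x
      = (derivative^[m] (legendrePoly ℓ)).eval x
          * ((1 - X ^ 2) ^ m * derivative^[m] (legendrePoly ℓ')).eval x := by
  have hnonneg : 0 ≤ 1 - x ^ 2 := by nlinarith [hx.1, hx.2]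
  have hhalf : (m : ℝ) / 2 ≥ 0 := by positivity
  have hsq : (1 - x ^ 2) ^ ((m : ℝ) / 2) * (1 - x ^ 2) ^ ((m : ℝ) / 2) = (1 - x ^ 2) ^ m := by
    rw [← Real.rpow_add_of_nonneg hnonneg hhalf hhalf, add_halves, Real.rpow_natCast]
  simp only [assocLegendreP, legendreP_eq_eval, iteratedDeriv_eval, eval_mul, eval_pow, eval_sub,
    eval_one, eval_X, ← hsq]
  ring

theorem assocLegendre_orthogonality_general (ℓ ℓ' m : ℕ)
    (hne : ℓ ≠ ℓ') :
    ∫ x in (-1 : ℝ)..1, assocLegendreP ℓ m x * assocLegendreP ℓ' m x = 0 := by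
  wlog hlt : ℓ' < ℓ generalizing ℓ ℓ'
  · simpa only [mul_comm] using this ℓ' ℓ hne.symm (by omega)
  have hdvd : (X ^ 2 - 1 : ℝ[X]) ^ m ∣ (1 - X ^ 2) ^ m * derivative^[m] (legendrePoly ℓ') :=
    (pow_dvd_pow_of_dvd ⟨-1, by ring⟩ m).mul_right _
  have hdeg := natDegree_one_sub_X_sq_pow_mul_iterate_derivative_le m (legendrePoly ℓ')
  have hdeg_legendre := natDegree_legendrePoly_le ℓ'
  rw [intervalIntegral.integral_congr fun x hx =>
      assocLegendreP_mul_assocLegendreP (Set.uIcc_of_le (by norm_num : (-1 : ℝ) ≤ 1) ▸ hx) ℓ ℓ' m]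
  exact integral_eval_iterate_derivative_legendrePoly_mul_eq_zero ℓ m hdvd (by omega)

/-- Orthogonality of associated Legendre functions of the same order: for `ℓ ≠ ℓ'`
with `m ≤ ℓ` and `m ≤ ℓ'`, `∫_{-1}^{1} P_ℓ^m(x) P_{ℓ'}^m(x) dx = 0`. -/
theorem assocLegendre_orthogonality (ℓ ℓ' m : ℕ)
    (hℓ : m ≤ ℓ) (hℓ' : m ≤ ℓ') (hne : ℓ ≠ ℓ') :
    ∫ x in (-1 : ℝ)..1, assocLegendreP ℓ m x * assocLegendreP ℓ' m x = 0 :=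
  assocLegendre_orthogonality_general ℓ ℓ' m hne
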